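/- arXiv:0712.1269 — 2 statements merged into one kernel-verified Lean document; each statement's English description precedes it below -/
import Mathlib

section
/- The orthogonal projection p restricted to the set of tight triangular vectors and the map θ restricted to L are mutually inverse: (i) for every a ∈ L, the vector θ(a) is tight triangular and p(θ(a)) = a; (ii) for every tight triangular b ∈ ℝ^E, p(b) ∈ L and θ(p(b)) = b. -/
open scoped BigOperators

abbrev Edge (n : ℕ) := {e : Sym2 (Fin n) // ¬ e.IsDiag}

namespace TSP
variable {n : ℕ}
noncomputable section

def dot (a x : Edge n → ℝ) : ℝ := ∑ e, a e * x e
def ev (a : Edge n → ℝ) (u v : Fin n) : ℝ :=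
  if h : u = v then 0 else a ⟨s(u, v), fun hd => h (Sym2.mk_isDiag_iff.mp hd)⟩
def indic (u v : Fin n) : Edge n → ℝ := fun e => if e.val = s(u, v) then 1 else 0
def delta (u : Fin n) : Edge n → ℝ := fun e => if u ∈ e.val then 1/2 else 0
def RootedTri (u v w : Fin n) : Prop := v ≠ w ∧ u ≠ v ∧ u ≠ w
def tri (a : Edge n → ℝ) (u v w : Fin n) : ℝ := ev a v u + ev a u w - ev a v w
def IsMetric (a : Edge n → ℝ) : Prop := ∀ u v w, RootedTri u v w → 0 ≤ tri a u v w
def IsTT (a : Edge n → ℝ) : Prop :=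
  IsMetric a ∧ ∀ u, ∃ v w, RootedTri u v w ∧ tri a u v w = 0
def lam (a : Edge n → ℝ) (u : Fin n) : ℝ :=
  sInf {r | ∃ v w, RootedTri u v w ∧ r = tri a u v w}
def theta (a : Edge n → ℝ) : Edge n → ℝ := fun e => a e - ∑ u, lam a u * delta u e
def zvec (n : ℕ) : Edge n → ℝ := fun _ => 2 / ((n : ℝ) - 1)
def gamma (a : Edge n → ℝ) : ℝ := -1 + dot a (zvec n) - ∑ u, lam a u
def nextF (i : Fin n) : Fin n := ⟨(i.val + 1) % n, Nat.mod_lt _ i.pos⟩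
def hamVec (σ : Equiv.Perm (Fin n)) : Edge n → ℝ :=
  fun e => if ∃ i : Fin n, e.val = s(σ i, σ (nextF i)) then 1 else 0
def stsp (n : ℕ) : Set (Edge n → ℝ) :=
  convexHull ℝ {x | ∃ σ : Equiv.Perm (Fin n), x = hamVec σ}
def degree (x : Edge n → ℝ) (u : Fin n) : ℝ := ∑ e, if u ∈ e.val then x e else 0
lemma ev_symm (a : Edge n → ℝ) (u v : Fin n) : ev a u v = ev a v u := by
  unfold ev
  rcases eq_or_ne u v with h | h
  · subst h; simp
  · rw [dif_neg h, dif_neg (Ne.symm h)]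
    congr 1
    exact Subtype.ext (Sym2.eq_swap)
def supportGraph (x : Edge n → ℝ) : SimpleGraph (Fin n) where
  Adj u v := u ≠ v ∧ 0 < ev x u v
  symm := ⟨fun u v h => ⟨h.1.symm, by rw [ev_symm]; exact h.2⟩⟩
  loopless := ⟨fun u h => h.1 rfl⟩
def IsEulerian (x : Edge n → ℝ) : Prop :=
  (∀ e, ∃ m : ℕ, x e = m) ∧ (supportGraph x).Connected ∧
    ∀ u, ∃ m : ℕ, 0 < m ∧ degree x u = 2 * m
def gtsp (n : ℕ) : Set (Edge n → ℝ) := convexHull ℝ {x | IsEulerian x}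
def IsFaceOf (Q F : Set (Edge n → ℝ)) : Prop :=
  ∃ a α, (∀ x ∈ Q, α ≤ dot a x) ∧ F = {x ∈ Q | dot a x = α}
def IsGood (F : Set (Edge n → ℝ)) : Prop := ∀ e : Edge n, ∃ x ∈ F, 0 < x e
def adim (X : Set (Edge n → ℝ)) : ℕ := Module.finrank ℝ (affineSpan ℝ X).direction
def direc (F : Set (Edge n → ℝ)) : Submodule ℝ (Edge n → ℝ) :=
  Submodule.span ℝ {d | ∃ x ∈ F, ∃ y ∈ F, d = y - x}
def shortcut (u v w : Fin n) : Edge n → ℝ :=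
  fun e => indic v w e - indic v u e - indic u w e
def gtspPolar (n : ℕ) : Set (Edge n → ℝ) := {b | ∀ x ∈ gtsp n, 1 ≤ dot b x}

/-- The face of `S` defined by `a ∈ D_S`. -/
def faceS (a : Edge n → ℝ) : Set (Edge n → ℝ) :=
  {x ∈ stsp n | dot a x = dot a (zvec n) - 1}

/-- `D_S`: the points `a ∈ L` whose inequality `a·x ≥ a·z − 1` is valid for `S`
and defines a nonempty good face of `S`. -/
def DS (n : ℕ) : Set (Edge n → ℝ) :=
  {a | (∀ u, dot (delta u) a = 0) ∧
       (∀ x ∈ stsp n, dot a (zvec n) - 1 ≤ dot a x) ∧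
       (faceS a).Nonempty ∧ IsGood (faceS a)}

/-- `D_P`: TT points of `P^△` defining nonempty good faces of `P`. -/
def DP (n : ℕ) : Set (Edge n → ℝ) :=
  {b | b ∈ gtspPolar n ∧ IsTT b ∧
       ({x ∈ gtsp n | dot b x = 1}).Nonempty ∧ IsGood {x ∈ gtsp n | dot b x = 1}}

/-- `𝔉(a)`: faces of `P` definable by rotated versions of `a·x ≥ a·z − 1`. -/
def Frot (a : Edge n → ℝ) : Set (Set (Edge n → ℝ)) :=
  {F | ∃ ξ : Fin n → ℝ,
    (∀ x ∈ gtsp n,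
      dot a (zvec n) - 1 + dot (∑ u, ξ u • delta u) (zvec n)
        ≤ dot (a + ∑ u, ξ u • delta u) x) ∧
    F = {x ∈ gtsp n |
      dot (a + ∑ u, ξ u • delta u) x
        = dot a (zvec n) - 1 + dot (∑ u, ξ u • delta u) (zvec n)}}

/-- `E^u(a)`: the edges achieving the minimal triangle slack rooted at `u`. -/
def Eu (a : Edge n → ℝ) (u : Fin n) : Set (Edge n) :=
  {e | ∃ v w, RootedTri u v w ∧ e.val = s(v, w) ∧ tri a u v w = lam a u}

def IsFacetP (n : ℕ) (G : Set (Edge n → ℝ)) : Prop :=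
  IsFaceOf (gtsp n) G ∧ adim G = n * (n - 1) / 2 - 1
def IsFacetS (n : ℕ) (F : Set (Edge n → ℝ)) : Prop :=
  IsFaceOf (stsp n) F ∧ adim F + 1 = adim (stsp n)
def IsNRFacet (n : ℕ) (G : Set (Edge n → ℝ)) : Prop :=
  IsFacetP n G ∧ IsFacetS n (G ∩ stsp n)
def IsDegreeFacet (n : ℕ) (G : Set (Edge n → ℝ)) : Prop :=
  ∃ u, G = {x ∈ gtsp n | dot (delta u) x = 1}
def IsNonNegFacet (n : ℕ) (G : Set (Edge n → ℝ)) : Prop :=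
  ∃ e : Edge n, G = {x ∈ gtsp n | x e = 0}
def IsNonNRFacet (n : ℕ) (G : Set (Edge n → ℝ)) : Prop :=
  IsFacetP n G ∧ IsGood G ∧ ¬ IsDegreeFacet n G ∧
    adim (G ∩ stsp n) + 1 < adim (stsp n)

/-- Solution set of the relaxation `R_B` (degree inequalities). -/
def RBge {k : ℕ} (n : ℕ) (b : Fin k → Edge n → ℝ) : Set (Edge n → ℝ) :=
  {x | (∀ j, 1 ≤ dot (b j) x) ∧ (∀ v, 1 ≤ dot (delta v) x) ∧ ∀ e, 0 ≤ x e}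

/-- Solution set of `R_B` with degree equations. -/
def RBeq {k : ℕ} (n : ℕ) (b : Fin k → Edge n → ℝ) : Set (Edge n → ℝ) :=
  {x | (∀ j, 1 ≤ dot (b j) x) ∧ (∀ v, dot (delta v) x = 1) ∧ ∀ e, 0 ≤ x e}

/-- The parsimonious property of the relaxation `R_B`. -/
def Parsimonious {k : ℕ} (n : ℕ) (b : Fin k → Edge n → ℝ) : Prop :=
  ∀ c : Edge n → ℝ, IsMetric c →
    sInf (dot c '' RBge n b) = sInf (dot c '' RBeq n b)

/-- Adjacency in the ridge graph of `P`. -/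
def RidgeAdj (n : ℕ) (F G : Set (Edge n → ℝ)) : Prop :=
  IsFacetP n F ∧ IsFacetP n G ∧ F ≠ G ∧ adim (F ∩ G) = n * (n - 1) / 2 - 2

/-- `q_I = Σ_{u ∉ I} δ_u`. -/
def qI (n : ℕ) (I : Finset (Fin n)) : Edge n → ℝ := ∑ u ∈ Iᶜ, delta u

/-- The face `G_I` of `P`. -/
def GI (n : ℕ) (a : Edge n → ℝ) (I : Finset (Fin n)) : Set (Edge n → ℝ) :=
  {x ∈ gtsp n | dot (theta a + qI n I) x = gamma a + dot (qI n I) (zvec n)}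

end

end TSP

/-!
Shifting a vector by `Σ c_u δ_u` lowers each slack `t_{u,vw}` by exactly `c_u`, hence lowers
`λ_u` by `c_u`. So `θ(a) = a - Σ λ_u(a) δ_u` has all `λ_u = 0`, i.e. it is tight triangular, and
`θ(b - Σ c_u δ_u) = b` whenever `b` is tight triangular. Since `L` is the common kernel of the
`δ_u`, its orthogonal complement is spanned by them: `p` only removes such a shift, which gives
`p(θ(a)) = a` for `a ∈ L` and `p(b) = b - Σ c_u δ_u` for some `c`.
-/

open Finset

lemma exists_sum_smul_eq_of_forall_dotProduct_eq_zero {K ι E : Type*} [Field K] [Fintype ι]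
    [Fintype E] [DecidableEq E] (v : ι → E → K) (r : E → K)
    (h : ∀ y, (∀ i, v i ⬝ᵥ y = 0) → r ⬝ᵥ y = 0) : ∃ c : ι → K, ∑ i, c i • v i = r := by
  let D := dotProductEquiv K E
  have hker : ⨅ i, LinearMap.ker (D (v i)) ≤ LinearMap.ker (D r) := fun y hy =>
    h y fun i => (Submodule.mem_iInf _).1 hy i
  obtain ⟨c, hc⟩ := (Submodule.mem_span_range_iff_exists_fun K).1 (mem_span_of_iInf_ker_le_ker hker)
  exact ⟨c, D.injective (by simpa only [map_sum, map_smul] using hc)⟩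

namespace TSP

variable {n : ℕ}

noncomputable def deltaComb (c : Fin n → ℝ) : Edge n → ℝ := ∑ u, c u • delta u

lemma dot_eq_dotProduct (a x : Edge n → ℝ) : dot a x = a ⬝ᵥ x := rfl

lemma theta_eq (a : Edge n → ℝ) : theta a = a - deltaComb (lam a) := by
  ext e
  simp [theta, deltaComb, Finset.sum_apply]

lemma deltaComb_neg (c : Fin n → ℝ) : deltaComb (-c) = -deltaComb c := by
  simp [deltaComb, sum_neg_distrib]

lemma ev_sub (a b : Edge n → ℝ) (u v : Fin n) : ev (a - b) u v = ev a u v - ev b u v := by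
  unfold ev
  split_ifs <;> simp

lemma ev_deltaComb (c : Fin n → ℝ) {v w : Fin n} (h : v ≠ w) :
    ev (deltaComb c) v w = (c v + c w) / 2 := by
  have hvw : ∀ u, (if u = v ∨ u = w then (1 / 2 : ℝ) else 0) =
      (if u = v then 1 / 2 else 0) + (if u = w then 1 / 2 else 0) := by
    intro u
    by_cases hv : u = v
    · subst hv; simp [h]
    · simp [hv]
  simp only [ev, h, dite_false, deltaComb, delta, Finset.sum_apply, Pi.smul_apply, Sym2.mem_iff,
    smul_eq_mul, hvw, mul_add, sum_add_distrib, mul_ite, mul_zero, sum_ite_eq',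
    mem_univ, if_true]
  ring

lemma tri_sub (a b : Edge n → ℝ) (u v w : Fin n) :
    tri (a - b) u v w = tri a u v w - tri b u v w := by
  simp only [tri, ev_sub]
  ring

lemma tri_deltaComb (c : Fin n → ℝ) {u v w : Fin n} (h : RootedTri u v w) :
    tri (deltaComb c) u v w = c u := by
  obtain ⟨hvw, huv, huw⟩ := h
  rw [tri, ev_deltaComb c (Ne.symm huv), ev_deltaComb c huw, ev_deltaComb c hvw]
  ring

lemma tri_sub_deltaComb (a : Edge n → ℝ) (c : Fin n → ℝ) {u v w : Fin n} (h : RootedTri u v w) :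
    tri (a - deltaComb c) u v w = tri a u v w - c u := by
  rw [tri_sub, tri_deltaComb c h]

lemma exists_rootedTri (hn : 3 ≤ n) (u : Fin n) : ∃ v w, RootedTri u v w := by
  have hcard : 1 < (univ.erase u).card := by
    rw [card_erase_of_mem (mem_univ u), card_univ, Fintype.card_fin]
    omega
  obtain ⟨v, hv, w, hw, hvw⟩ := one_lt_card.1 hcard
  exact ⟨v, w, hvw, (ne_of_mem_erase hv).symm, (ne_of_mem_erase hw).symm⟩

def triValues (a : Edge n → ℝ) (u : Fin n) : Set ℝ :=
  {r | ∃ v w, RootedTri u v w ∧ r = tri a u v w}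

lemma finite_triValues (a : Edge n → ℝ) (u : Fin n) : (triValues a u).Finite :=
  (Set.finite_range fun p : Fin n × Fin n => tri a u p.1 p.2).subset
    (by rintro r ⟨v, w, -, rfl⟩; exact ⟨(v, w), rfl⟩)

lemma lam_le_tri (a : Edge n → ℝ) {u v w : Fin n} (h : RootedTri u v w) :
    lam a u ≤ tri a u v w :=
  csInf_le (finite_triValues a u).bddBelow ⟨v, w, h, rfl⟩

lemma exists_tri_eq_lam (hn : 3 ≤ n) (a : Edge n → ℝ) (u : Fin n) :
    ∃ v w, RootedTri u v w ∧ tri a u v w = lam a u := by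
  obtain ⟨v, w, h⟩ := exists_rootedTri hn u
  have hne : (triValues a u).Nonempty := ⟨_, v, w, h, rfl⟩
  obtain ⟨v, w, h, hr⟩ := hne.csInf_mem (finite_triValues a u)
  exact ⟨v, w, h, hr.symm⟩

lemma lam_sub_deltaComb (hn : 3 ≤ n) (a : Edge n → ℝ) (c : Fin n → ℝ) (u : Fin n) :
    lam (a - deltaComb c) u = lam a u - c u := by
  apply le_antisymm
  · obtain ⟨v, w, h, heq⟩ := exists_tri_eq_lam hn a u
    calc lam (a - deltaComb c) u ≤ tri (a - deltaComb c) u v w := lam_le_tri _ h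
      _ = lam a u - c u := by rw [tri_sub_deltaComb a c h, heq]
  · obtain ⟨v, w, h, heq⟩ := exists_tri_eq_lam hn (a - deltaComb c) u
    rw [← heq, tri_sub_deltaComb a c h]
    linarith [lam_le_tri a h]

lemma isTT_theta (hn : 3 ≤ n) (a : Edge n → ℝ) : IsTT (theta a) := by
  rw [theta_eq]
  refine ⟨fun u v w h => ?_, fun u => ?_⟩
  · rw [tri_sub_deltaComb a _ h, sub_nonneg]
    exact lam_le_tri a h
  · obtain ⟨v, w, h, heq⟩ := exists_tri_eq_lam hn a u
    exact ⟨v, w, h, by rw [tri_sub_deltaComb a _ h, heq, sub_self]⟩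

lemma lam_eq_zero_of_isTT (hn : 3 ≤ n) {b : Edge n → ℝ} (hb : IsTT b) (u : Fin n) :
    lam b u = 0 := by
  obtain ⟨v, w, h, h0⟩ := hb.2 u
  obtain ⟨v', w', h', heq⟩ := exists_tri_eq_lam hn b u
  exact le_antisymm (h0 ▸ lam_le_tri b h) (heq ▸ hb.1 u v' w' h')

lemma theta_sub_deltaComb_of_isTT (hn : 3 ≤ n) {b : Edge n → ℝ} (hb : IsTT b) (c : Fin n → ℝ) :
    theta (b - deltaComb c) = b := by
  have hlam : lam (b - deltaComb c) = -c := by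
    ext u
    rw [lam_sub_deltaComb hn, lam_eq_zero_of_isTT hn hb, zero_sub, Pi.neg_apply]
  rw [theta_eq, hlam, deltaComb_neg, sub_neg_eq_add, sub_add_cancel]

lemma dot_deltaComb_eq_zero (c : Fin n → ℝ) {y : Edge n → ℝ} (hy : ∀ u, dot (delta u) y = 0) :
    dot (deltaComb c) y = 0 := by
  simp only [dot_eq_dotProduct] at hy ⊢
  simp [deltaComb, sum_dotProduct, smul_dotProduct, hy]

lemma eq_of_sub_deltaComb_of_orthogonal {a q : Edge n → ℝ} (c : Fin n → ℝ)
    (ha : ∀ u, dot (delta u) a = 0) (hq : ∀ u, dot (delta u) q = 0)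
    (hperp : ∀ y, (∀ u, dot (delta u) y = 0) → dot (a - deltaComb c - q) y = 0) : q = a := by
  have hd : ∀ u, dot (delta u) (a - q) = 0 := fun u => by
    rw [dot_eq_dotProduct, dotProduct_sub, ← dot_eq_dotProduct, ← dot_eq_dotProduct, ha, hq,
      sub_zero]
  have hdd : (a - q) ⬝ᵥ (a - q) = 0 := calc
    (a - q) ⬝ᵥ (a - q) = dot (a - deltaComb c - q) (a - q) + dot (deltaComb c) (a - q) := by
      rw [dot_eq_dotProduct, dot_eq_dotProduct, ← add_dotProduct, sub_right_comm, sub_add_cancel]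
    _ = 0 := by rw [hperp _ hd, dot_deltaComb_eq_zero c hd, add_zero]
  exact (sub_eq_zero.1 (dotProduct_self_eq_zero.1 hdd)).symm

lemma exists_deltaComb_eq {r : Edge n → ℝ}
    (h : ∀ y, (∀ u, dot (delta u) y = 0) → dot r y = 0) : ∃ c, deltaComb c = r :=
  exists_sum_smul_eq_of_forall_dotProduct_eq_zero delta r h

/-- the orthogonal projection `p` onto `L` and `θ` restricted to
the TT vectors are mutually inverse. -/
theorem stmt9 (n : ℕ) (hn : 5 ≤ n)
    (p : (Edge n → ℝ) → (Edge n → ℝ))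
    (hp : ∀ a : Edge n → ℝ,
      (∀ u, dot (delta u) (p a) = 0) ∧
      (∀ y : Edge n → ℝ, (∀ u, dot (delta u) y = 0) → dot (a - p a) y = 0)) :
    (∀ a : Edge n → ℝ, (∀ u, dot (delta u) a = 0) →
        IsTT (theta a) ∧ p (theta a) = a) ∧
    (∀ b : Edge n → ℝ, IsTT b →
        (∀ u, dot (delta u) (p b) = 0) ∧ theta (p b) = b) := by
  have hn3 : 3 ≤ n := by omega
  refine ⟨fun a ha => ⟨isTT_theta hn3 a, ?_⟩, fun b hb => ⟨(hp b).1, ?_⟩⟩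
  · obtain ⟨hq, hperp⟩ := hp (theta a)
    rw [theta_eq] at hq hperp ⊢
    exact eq_of_sub_deltaComb_of_orthogonal (lam a) ha hq hperp
  · obtain ⟨c, hc⟩ := exists_deltaComb_eq (hp b).2
    rw [show p b = b - deltaComb c by rw [hc, sub_sub_cancel]]
    exact theta_sub_deltaComb_of_isTT hn3 hb c

end TSP
end

section
/- Let F be a nonempty good face of the graphical traveling salesman polyhedron P and let a ∈ ℝ^E be such that a·x ≥ 1 is valid for P and F = {x ∈ P : a·x = 1}. Then for every rooted triangle (u,vw), the shortcut s_{u,vw} is feasible for F (i.e., s_{u,vw} ∈ direc F) if and only if a·s_{u,vw} = 0. -/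
open scoped BigOperators

namespace TSP
variable {n : ℕ}
/-! Necessity holds because `direc F` lies in the kernel of `x ↦ a·x`. For sufficiency, goodness
gives a point of `F` using the edge `vw`; as `F` is an exposed face of the convex hull of the
connected Eulerian vectors, some connected Eulerian vector `z ∈ F` already uses `vw`. Replacing one
copy of `vw` by the path `v u w` keeps `z` connected and Eulerian, so `z - s_{u,vw}` is again in
`P`, and it lies in `F` because `a·s_{u,vw} = 0`. Hence `s_{u,vw} = z - (z - s_{u,vw}) ∈ direc F`. -/

theorem exists_mem_eq_and_pos_of_mem_convexHull {E : Type*} [AddCommGroup E] [Module ℝ E]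
    {S : Set E} {f g : E →ₗ[ℝ] ℝ} {c : ℝ} {x : E} (hS : ∀ y ∈ S, c ≤ f y)
    (hx : x ∈ convexHull ℝ S) (hfx : f x = c) (hgx : 0 < g x) :
    ∃ z ∈ S, f z = c ∧ 0 < g z := by
  obtain ⟨ι, _, w, z, hw0, hw1, hzS, rfl⟩ := mem_convexHull_iff_exists_fintype.mp hx
  simp only [map_sum, map_smul, smul_eq_mul] at hfx hgx
  have htight : ∀ i, w i * (f (z i) - c) = 0 := by
    have hsum : ∑ i, w i * (f (z i) - c) = 0 := by
      simp only [mul_sub, Finset.sum_sub_distrib, ← Finset.sum_mul, hfx, hw1, one_mul, sub_self]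
    intro i
    exact (Finset.sum_eq_zero_iff_of_nonneg fun i _ =>
      mul_nonneg (hw0 i) (sub_nonneg.mpr (hS _ (hzS i)))).mp hsum i (Finset.mem_univ i)
  obtain ⟨i, -, hi⟩ := Finset.exists_lt_of_sum_lt (f := fun _ => (0 : ℝ))
    (by simpa using hgx)
  have hgz : 0 < g (z i) := pos_of_mul_pos_right hi (hw0 i)
  have hwi : 0 < w i := pos_of_mul_pos_left hi hgz.le
  exact ⟨z i, hzS i, sub_eq_zero.mp ((mul_eq_zero.mp (htight i)).resolve_left hwi.ne'), hgz⟩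

theorem _root_.SimpleGraph.Connected.of_adj_reachable {V : Type*} {G H : SimpleGraph V}
    (hG : G.Connected) (h : ∀ p q, G.Adj p q → H.Reachable p q) : H.Connected := by
  refine (SimpleGraph.connected_iff H).mpr ⟨fun p q => ?_, hG.nonempty⟩
  simp only [SimpleGraph.reachable_iff_reflTransGen] at h ⊢
  exact ((SimpleGraph.reachable_iff_reflTransGen p q).mp (hG.preconnected p q)).lift' id h

variable {n : ℕ}

lemma dot_sub (a x y : Edge n → ℝ) : dot a (x - y) = dot a x - dot a y :=
  dotProduct_sub a x y

lemma dot_eq_zero_of_mem_direc {a : Edge n → ℝ} {c : ℝ} {F : Set (Edge n → ℝ)}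
    (hF : ∀ x ∈ F, dot a x = c) {d : Edge n → ℝ} (hd : d ∈ direc F) : dot a d = 0 := by
  have hker : direc F ≤ LinearMap.ker (dotProductBilin ℝ ℝ a) := by
    refine Submodule.span_le.mpr ?_
    rintro _ ⟨x, hx, y, hy, rfl⟩
    simp only [SetLike.mem_coe, LinearMap.mem_ker, dotProductBilin_apply_apply, dotProduct_sub]
    exact sub_eq_zero.mpr ((hF y hy).trans (hF x hx).symm)
  exact hker hd

lemma sub_mem_direc {F : Set (Edge n → ℝ)} {x y : Edge n → ℝ} (hx : x ∈ F) (hy : y ∈ F) :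
    y - x ∈ direc F :=
  Submodule.subset_span ⟨x, hx, y, hy, rfl⟩

def edge {u v : Fin n} (h : u ≠ v) : Edge n := ⟨s(u, v), fun hd => h (Sym2.mk_isDiag_iff.mp hd)⟩

lemma ev_of_ne (a : Edge n → ℝ) {u v : Fin n} (h : u ≠ v) : ev a u v = a (edge h) :=
  dif_neg h

lemma supportGraph_adj {x : Edge n → ℝ} {p q : Fin n} :
    (supportGraph x).Adj p q ↔ ∃ h : p ≠ q, 0 < x (edge h) := by
  refine ⟨fun ⟨h, hx⟩ => ⟨h, ?_⟩, fun ⟨h, hx⟩ => ⟨h, ?_⟩⟩ <;> rwa [ev_of_ne x h] at *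

lemma indic_edge {u v : Fin n} (h : u ≠ v) : indic u v (edge h) = 1 :=
  if_pos rfl

lemma indic_nonneg (u v : Fin n) (e : Edge n) : 0 ≤ indic u v e := by
  unfold indic; split_ifs <;> norm_num

lemma exists_nat_indic_eq (u v : Fin n) (e : Edge n) : ∃ k : ℕ, indic u v e = k := by
  unfold indic; split_ifs
  exacts [⟨1, Nat.cast_one.symm⟩, ⟨0, Nat.cast_zero.symm⟩]

lemma degree_sub (x y : Edge n → ℝ) (p : Fin n) :
    degree (x - y) p = degree x p - degree y p := by
  simp only [degree, ← Finset.sum_sub_distrib]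
  refine Finset.sum_congr rfl fun e _ => ?_
  split_ifs <;> simp

lemma degree_indic {u v : Fin n} (h : u ≠ v) (p : Fin n) :
    degree (indic u v) p = if p ∈ s(u, v) then 1 else 0 := by
  rw [degree, Finset.sum_eq_single (edge h)]
  · simp only [indic_edge]; rfl
  · intro e _ he
    have hval : e.val ≠ s(u, v) := fun hv => he (Subtype.ext hv)
    simp [indic, hval]
  · simp

lemma degree_shortcut {u v w : Fin n} (h : RootedTri u v w) (p : Fin n) :
    degree (shortcut u v w) p = if p = u then -2 else 0 := by
  obtain ⟨hvw, huv, huw⟩ := h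
  have hsc : shortcut u v w = indic v w - indic v u - indic u w := rfl
  rw [hsc, degree_sub, degree_sub, degree_indic hvw, degree_indic (Ne.symm huv),
    degree_indic huw]
  by_cases hpu : p = u
  · subst hpu; norm_num [huv, huw]
  · rcases eq_or_ne p v with rfl | hpv
    · simp [hvw, hpu]
    · rcases eq_or_ne p w with rfl | hpw
      · simp [hpu, hpv]
      · simp [hpu, hpv, hpw]

lemma sub_shortcut_apply_edge {u v w : Fin n} (h : RootedTri u v w) (x : Edge n → ℝ) :
    (x - shortcut u v w) (edge h.1) = x (edge h.1) - 1 := by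
  have hvu : s(v, w) ≠ s(v, u) := fun he => h.2.2 (Sym2.congr_right.mp he).symm
  have huw : s(v, w) ≠ s(u, w) := fun he => h.2.1 (Sym2.congr_left.mp he).symm
  simp [shortcut, indic, edge, hvu, huw]

lemma sub_shortcut_apply_of_ne {u v w : Fin n} (x : Edge n → ℝ) {e : Edge n}
    (he : e.val ≠ s(v, w)) :
    (x - shortcut u v w) e = x e + indic v u e + indic u w e := by
  simp only [Pi.sub_apply, shortcut, indic, he, if_false]
  ring

lemma IsEulerian.nonneg {x : Edge n → ℝ} (hx : IsEulerian x) (e : Edge n) : 0 ≤ x e := by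
  obtain ⟨m, hm⟩ := hx.1 e
  rw [hm]
  exact m.cast_nonneg

lemma IsEulerian.one_le_of_pos {x : Edge n → ℝ} (hx : IsEulerian x) {e : Edge n}
    (h : 0 < x e) : 1 ≤ x e := by
  obtain ⟨m, hm⟩ := hx.1 e
  rw [hm] at h ⊢
  exact_mod_cast Nat.one_le_iff_ne_zero.mpr (by rintro rfl; simp at h)

section Shortcut

variable {u v w : Fin n} {x : Edge n → ℝ}

lemma exists_nat_sub_shortcut_apply (h : RootedTri u v w) (hx : IsEulerian x)
    (hxvw : 1 ≤ x (edge h.1)) (e : Edge n) : ∃ m : ℕ, (x - shortcut u v w) e = m := by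
  obtain ⟨m, hm⟩ := hx.1 e
  by_cases he : e.val = s(v, w)
  · obtain rfl : e = edge h.1 := Subtype.ext he
    have hm1 : 1 ≤ m := by exact_mod_cast hm ▸ hxvw
    exact ⟨m - 1, by rw [sub_shortcut_apply_edge h, hm, Nat.cast_sub hm1, Nat.cast_one]⟩
  · obtain ⟨k, hk⟩ := exists_nat_indic_eq v u e
    obtain ⟨l, hl⟩ := exists_nat_indic_eq u w e
    exact ⟨m + k + l, by rw [sub_shortcut_apply_of_ne x he, hm, hk, hl]; push_cast; rfl⟩

lemma connected_supportGraph_sub_shortcut (h : RootedTri u v w) (hx : IsEulerian x) :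
    (supportGraph (x - shortcut u v w)).Connected := by
  obtain ⟨hvw, huv, huw⟩ := h
  have hvu_adj : (supportGraph (x - shortcut u v w)).Adj v u := by
    refine supportGraph_adj.mpr ⟨Ne.symm huv, ?_⟩
    rw [sub_shortcut_apply_of_ne x fun he => huw (Sym2.congr_right.mp he), indic_edge]
    linarith [hx.nonneg (edge (Ne.symm huv)), indic_nonneg u w (edge (Ne.symm huv))]
  have huw_adj : (supportGraph (x - shortcut u v w)).Adj u w := by
    refine supportGraph_adj.mpr ⟨huw, ?_⟩
    rw [sub_shortcut_apply_of_ne x fun he => huv (Sym2.congr_left.mp he), indic_edge]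
    linarith [hx.nonneg (edge huw), indic_nonneg v u (edge huw)]
  refine hx.2.1.of_adj_reachable fun p q hpq => ?_
  obtain ⟨hpq, hpos⟩ := supportGraph_adj.mp hpq
  by_cases he : s(p, q) = s(v, w)
  · rcases Sym2.eq_iff.mp he with ⟨rfl, rfl⟩ | ⟨rfl, rfl⟩
    · exact hvu_adj.reachable.trans huw_adj.reachable
    · exact huw_adj.symm.reachable.trans hvu_adj.symm.reachable
  · refine (supportGraph_adj.mpr ⟨hpq, ?_⟩).reachable
    rw [sub_shortcut_apply_of_ne x he]
    linarith [indic_nonneg v u (edge hpq), indic_nonneg u w (edge hpq)]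

lemma exists_degree_sub_shortcut (h : RootedTri u v w) (hx : IsEulerian x) (p : Fin n) :
    ∃ m : ℕ, 0 < m ∧ degree (x - shortcut u v w) p = 2 * m := by
  obtain ⟨m, hm0, hm⟩ := hx.2.2 p
  rw [degree_sub, degree_shortcut h, hm]
  by_cases hpu : p = u
  · exact ⟨m + 1, m.succ_pos, by rw [if_pos hpu]; push_cast; ring⟩
  · exact ⟨m, hm0, by rw [if_neg hpu, sub_zero]⟩

theorem IsEulerian.sub_shortcut (h : RootedTri u v w) (hx : IsEulerian x)
    (hxvw : 1 ≤ x (edge h.1)) : IsEulerian (x - shortcut u v w) :=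
  ⟨exists_nat_sub_shortcut_apply h hx hxvw, connected_supportGraph_sub_shortcut h hx,
    exists_degree_sub_shortcut h hx⟩

end Shortcut

theorem stmt10_general (n : ℕ) (a : Edge n → ℝ)
    (hvalid : ∀ x ∈ gtsp n, 1 ≤ dot a x)
    (hgood : IsGood {x ∈ gtsp n | dot a x = 1}) :
    ∀ u v w : Fin n, RootedTri u v w →
      (shortcut u v w ∈ direc {x ∈ gtsp n | dot a x = 1} ↔
        dot a (shortcut u v w) = 0) := by
  intro u v w h
  refine ⟨dot_eq_zero_of_mem_direc fun x hx => hx.2, fun hs => ?_⟩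
  have mem_face : ∀ y, IsEulerian y → dot a y = 1 → y ∈ {x ∈ gtsp n | dot a x = 1} :=
    fun y hy hy1 => ⟨subset_convexHull ℝ _ hy, hy1⟩
  obtain ⟨x, ⟨hxP, hx1⟩, hxe⟩ := hgood (edge h.1)
  obtain ⟨z, hz, hz1, hze⟩ : ∃ z ∈ {y | IsEulerian y}, dot a z = 1 ∧ 0 < z (edge h.1) :=
    exists_mem_eq_and_pos_of_mem_convexHull
      (f := dotProductBilin ℝ ℝ a) (g := LinearMap.proj (edge h.1))
      (fun y hy => hvalid y (subset_convexHull ℝ _ hy)) hxP hx1 hxe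
  have hz' : IsEulerian (z - shortcut u v w) := hz.sub_shortcut h (hz.one_le_of_pos hze)
  have hz'1 : dot a (z - shortcut u v w) = 1 := by rw [dot_sub, hz1, hs, sub_zero]
  simpa using sub_mem_direc (mem_face _ hz' hz'1) (mem_face z hz hz1)

/-- for a nonempty good face `F` of `P` defined by `a·x ≥ 1`,
a shortcut is feasible for `F` iff it is orthogonal to `a`. -/
theorem stmt10 (n : ℕ) (hn : 5 ≤ n) (a : Edge n → ℝ)
    (hvalid : ∀ x ∈ gtsp n, 1 ≤ dot a x)
    (hne : ({x ∈ gtsp n | dot a x = 1}).Nonempty)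
    (hgood : IsGood {x ∈ gtsp n | dot a x = 1}) :
    ∀ u v w : Fin n, RootedTri u v w →
      (shortcut u v w ∈ direc {x ∈ gtsp n | dot a x = 1} ↔
        dot a (shortcut u v w) = 0) :=
  stmt10_general n a hvalid hgood

end TSP
end
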